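/- Let Z be a standard complex Gaussian random variable and, for q ∈ [0,1), consider the function φ ↦ qφ − E ln I₀(φ|Z|²) on ℝ. Then: (1) for every q ∈ [0,1) this function has a unique maximizer φ₂(q), and it satisfies 0 ≤ φ₂(q) < ∞; (2) for every η ∈ (0,1), sup_{q ∈ [0,1−η]} φ₂(q) < ∞. -/

import Mathlib

open MeasureTheory ProbabilityTheory

/-- The law of a standard complex Gaussian random variable. -/
noncomputable def cgauss : Measure ℂ :=
  Measure.map (fun p : ℝ × ℝ => (p.1 : ℂ) + p.2 * Complex.I)
    ((gaussianReal 0 (1 / 2)).prod (gaussianReal 0 (1 / 2)))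

/-- The modified Bessel function of the first kind of order zero,
`I₀(x) = (2π)⁻¹ ∫_{−π}^{π} e^{x cos θ} dθ`. -/
noncomputable def I0 (x : ℝ) : ℝ :=
  (2 * Real.pi)⁻¹ * ∫ θ in Set.Ioc (-Real.pi) Real.pi, Real.exp (x * Real.cos θ)

/-!
Write `G(φ) = E ln I₀(φ|Z|²)`. Since `1 ≤ I₀` and `ln I₀` is 1-Lipschitz, `G` is finite,
continuous, `G(0) = 0`, and `G(φ) > 0` for `φ ≠ 0` because `Z ≠ 0` almost surely. By the
Cauchy–Schwarz inequality (with its equality case) `ln I₀` is strictly convex, hence so is `G`,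
so `φ ↦ qφ − G(φ)` has at most one maximizer. Keeping only the arc `|θ| ≤ δ` in the integral
defining `I₀` gives `G(φ) ≥ φ cos δ − ln(π/δ)` for `φ ≥ 0`, since `E|Z|² = 1`. Choosing `δ` with
`cos δ > q`, the objective is negative for `φ < 0` and for `φ > ln(π/δ)/(cos δ − q)`, and it
vanishes at `0`; this gives existence, nonnegativity, and a bound depending only on an upper
bound `1 − η` for `q`.
-/

open Set Real

lemma continuous_exp_mul_cos (x : ℝ) : Continuous fun θ => exp (x * cos θ) := by
  fun_prop

lemma intervalIntegral_exp_mul_cos (x : ℝ) : ∫ θ in -π..π, exp (x * cos θ) = 2 * π * I0 x := by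
  rw [I0, intervalIntegral.integral_of_le (by linarith [pi_pos]), ← mul_assoc,
    mul_inv_cancel₀ (by positivity), one_mul]

lemma intervalIntegral_one_add_mul_cos (x : ℝ) : ∫ θ in -π..π, (1 + x * cos θ) = 2 * π := by
  simp [intervalIntegral.integral_add, intervalIntegral.integral_const_mul, integral_cos]
  ring

@[simp] lemma I0_zero : I0 0 = 1 := by
  have h := intervalIntegral_exp_mul_cos 0
  simp only [zero_mul, exp_zero, intervalIntegral.integral_const, smul_eq_mul, mul_one] at h
  nlinarith [pi_pos]

lemma one_le_I0 (x : ℝ) : 1 ≤ I0 x := by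
  have h : ∫ θ in -π..π, (1 + x * cos θ) ≤ ∫ θ in -π..π, exp (x * cos θ) :=
    intervalIntegral.integral_mono_on (by linarith [pi_pos])
      ((by fun_prop : Continuous _).intervalIntegrable _ _)
      ((continuous_exp_mul_cos x).intervalIntegrable _ _)
      fun θ _ => by linarith [add_one_le_exp (x * cos θ)]
  rw [intervalIntegral_one_add_mul_cos, intervalIntegral_exp_mul_cos] at h
  exact (le_mul_iff_one_le_right (by positivity)).1 h

lemma one_lt_I0 {x : ℝ} (hx : x ≠ 0) : 1 < I0 x := by
  have h : ∫ θ in -π..π, (1 + x * cos θ) < ∫ θ in -π..π, exp (x * cos θ) :=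
    intervalIntegral.integral_lt_integral_of_continuousOn_of_le_of_exists_lt
      (by linarith [pi_pos]) (by fun_prop) (by fun_prop)
      (fun θ _ => by linarith [add_one_le_exp (x * cos θ)])
      ⟨0, ⟨by linarith [pi_pos], pi_pos.le⟩, by simpa [add_comm] using add_one_lt_exp hx⟩
  rw [intervalIntegral_one_add_mul_cos, intervalIntegral_exp_mul_cos] at h
  exact (lt_mul_iff_one_lt_right (by positivity)).1 h

lemma I0_pos (x : ℝ) : 0 < I0 x := one_pos.trans_le (one_le_I0 x)

lemma log_I0_nonneg (x : ℝ) : 0 ≤ log (I0 x) := log_nonneg (one_le_I0 x)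

lemma log_I0_pos {x : ℝ} (hx : x ≠ 0) : 0 < log (I0 x) := log_pos (one_lt_I0 hx)

lemma I0_le_exp_abs_sub_mul (x y : ℝ) : I0 x ≤ exp |x - y| * I0 y := by
  have h : ∫ θ in -π..π, exp (x * cos θ) ≤ ∫ θ in -π..π, exp |x - y| * exp (y * cos θ) := by
    refine intervalIntegral.integral_mono_on (by linarith [pi_pos])
      ((continuous_exp_mul_cos x).intervalIntegrable _ _)
      (((continuous_exp_mul_cos y).const_mul _).intervalIntegrable _ _) fun θ _ => ?_
    rw [← exp_add, exp_le_exp]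
    have : (x - y) * cos θ ≤ |x - y| := (le_abs_self _).trans <| by
      rw [abs_mul]; exact mul_le_of_le_one_right (abs_nonneg _) (abs_cos_le_one θ)
    linarith
  rw [intervalIntegral.integral_const_mul, intervalIntegral_exp_mul_cos,
    intervalIntegral_exp_mul_cos, mul_left_comm] at h
  exact le_of_mul_le_mul_left h (by positivity)

lemma abs_log_I0_sub_log_I0_le (x y : ℝ) : |log (I0 x) - log (I0 y)| ≤ |x - y| := by
  have key : ∀ x y, log (I0 x) - log (I0 y) ≤ |x - y| := fun x y => by
    have := log_le_log (I0_pos x) (I0_le_exp_abs_sub_mul x y)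
    rw [log_mul (exp_ne_zero _) (I0_pos y).ne', log_exp] at this
    linarith
  exact abs_sub_le_iff.2 ⟨key x y, abs_sub_comm x y ▸ key y x⟩

lemma continuous_log_I0 : Continuous fun x => log (I0 x) :=
  (LipschitzWith.of_dist_le_mul (K := 1) fun x y => by
    simpa [Real.dist_eq] using abs_log_I0_sub_log_I0_le x y).continuous

lemma log_I0_le_abs (x : ℝ) : log (I0 x) ≤ |x| := by
  simpa using (le_abs_self _).trans (abs_log_I0_sub_log_I0_le x 0)

lemma mul_cos_sub_log_le_log_I0 {x δ : ℝ} (hx : 0 ≤ x) (hδ : 0 < δ) (hδπ : δ ≤ π) :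
    x * cos δ - log (π / δ) ≤ log (I0 x) := by
  have harc : 2 * δ * exp (x * cos δ) ≤ ∫ θ in -π..π, exp (x * cos θ) :=
    calc 2 * δ * exp (x * cos δ) = ∫ _ in -δ..δ, exp (x * cos δ) := by simp; ring
      _ ≤ ∫ θ in -δ..δ, exp (x * cos θ) :=
        intervalIntegral.integral_mono_on (by linarith) intervalIntegrable_const
          ((continuous_exp_mul_cos x).intervalIntegrable _ _) fun θ hθ => by
            gcongr
            rw [← cos_abs θ]
            exact cos_le_cos_of_nonneg_of_le_pi (abs_nonneg θ) hδπ (abs_le.2 hθ)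
      _ ≤ ∫ θ in -π..π, exp (x * cos θ) :=
        intervalIntegral.integral_mono_interval (by linarith) (by linarith) hδπ
          (ae_of_all _ fun θ => (exp_pos _).le) ((continuous_exp_mul_cos x).intervalIntegrable _ _)
  rw [intervalIntegral_exp_mul_cos] at harc
  have hI : δ / π * exp (x * cos δ) ≤ I0 x := by
    rw [div_mul_eq_mul_div, div_le_iff₀ pi_pos]
    linarith
  have := log_le_log (by positivity [pi_pos]) hI
  rw [log_mul (by positivity [pi_pos]) (exp_ne_zero _), log_exp, log_div hδ.ne' pi_ne_zero] at this
  rw [log_div pi_ne_zero hδ.ne']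
  linarith

-- `2π` times the left side is `∫ (e^{x cos θ / 2} - t e^{y cos θ / 2})² dθ` over `[-π, π]`.
lemma I0_sub_two_mul_add_pos {x y : ℝ} (hxy : x ≠ y) (t : ℝ) :
    0 < I0 x - 2 * t * I0 ((x + y) / 2) + t ^ 2 * I0 y := by
  set f := fun θ => (exp (x / 2 * cos θ) - t * exp (y / 2 * cos θ)) ^ 2 with hf
  have hexpand : ∀ θ, f θ =
      exp (x * cos θ) - 2 * t * exp ((x + y) / 2 * cos θ) + t ^ 2 * exp (y * cos θ) := by
    intro θ
    rw [show x * cos θ = x / 2 * cos θ + x / 2 * cos θ by ring,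
      show (x + y) / 2 * cos θ = x / 2 * cos θ + y / 2 * cos θ by ring,
      show y * cos θ = y / 2 * cos θ + y / 2 * cos θ by ring, exp_add, exp_add, exp_add]
    ring
  have hpoint : ∃ c ∈ Icc (-π) π, 0 < f c := by
    by_cases h0 : exp (x / 2) = t * exp (y / 2)
    · have ht : t ≠ 1 := by
        rintro rfl
        exact hxy (by linarith [exp_injective (by simpa using h0)])
      exact ⟨π / 2, ⟨by linarith [pi_pos], by linarith [pi_pos]⟩,
        by simpa [hf] using pow_pos (abs_pos.2 (sub_ne_zero.2 ht.symm)) 2⟩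
    · exact ⟨0, ⟨by linarith [pi_pos], pi_pos.le⟩,
        by simpa [hf] using pow_pos (abs_pos.2 (sub_ne_zero.2 h0)) 2⟩
  have hint : 0 < ∫ θ in -π..π, f θ :=
    intervalIntegral.integral_pos (by linarith [pi_pos]) (by fun_prop)
      (fun θ _ => sq_nonneg _) hpoint
  have hii : ∀ c, IntervalIntegrable (fun θ => exp (c * cos θ)) volume (-π) π :=
    fun c => (continuous_exp_mul_cos c).intervalIntegrable _ _
  simp_rw [hexpand] at hint
  rw [intervalIntegral.integral_add ((hii x).sub ((hii _).const_mul _)) ((hii y).const_mul _),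
    intervalIntegral.integral_sub (hii x) ((hii _).const_mul _),
    intervalIntegral.integral_const_mul, intervalIntegral.integral_const_mul,
    intervalIntegral_exp_mul_cos, intervalIntegral_exp_mul_cos, intervalIntegral_exp_mul_cos]
    at hint
  nlinarith [pi_pos]

lemma I0_midpoint_sq_lt {x y : ℝ} (hxy : x ≠ y) : I0 ((x + y) / 2) ^ 2 < I0 x * I0 y := by
  have h := I0_sub_two_mul_add_pos hxy (I0 ((x + y) / 2) / I0 y)
  have hy := I0_pos y
  field_simp at h
  nlinarith

lemma log_I0_midpoint_lt {x y : ℝ} (hxy : x ≠ y) :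
    log (I0 ((x + y) / 2)) < (log (I0 x) + log (I0 y)) / 2 := by
  have := log_lt_log (pow_pos (I0_pos _) 2) (I0_midpoint_sq_lt hxy)
  rw [log_pow, log_mul (I0_pos x).ne' (I0_pos y).ne'] at this
  push_cast at this
  linarith

lemma measurable_ofReal_add_mul_I : Measurable fun p : ℝ × ℝ => (p.1 : ℂ) + p.2 * Complex.I := by
  fun_prop

instance : IsProbabilityMeasure cgauss :=
  Measure.isProbabilityMeasure_map measurable_ofReal_add_mul_I.aemeasurable

lemma integrable_sq_gaussianReal (μ : ℝ) (v : NNReal) :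
    Integrable (fun x => x ^ 2) (gaussianReal μ v) :=
  (memLp_id_gaussianReal 2).integrable_sq

lemma integral_sq_gaussianReal_zero (v : NNReal) : ∫ x, x ^ 2 ∂gaussianReal 0 v = v := by
  simpa [integral_id_gaussianReal] using
    (variance_eq_integral measurable_id.aemeasurable (μ := gaussianReal 0 v)).symm.trans
      variance_id_gaussianReal

lemma integrable_normSq_cgauss : Integrable Complex.normSq cgauss := by
  rw [cgauss, integrable_map_measure Complex.continuous_normSq.aestronglyMeasurable
    measurable_ofReal_add_mul_I.aemeasurable]
  simp only [Function.comp_def, Complex.normSq_add_mul_I]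
  exact ((integrable_sq_gaussianReal 0 _).comp_fst _).add
    ((integrable_sq_gaussianReal 0 _).comp_snd _)

lemma integral_normSq_cgauss : ∫ z, Complex.normSq z ∂cgauss = 1 := by
  rw [cgauss, integral_map measurable_ofReal_add_mul_I.aemeasurable
    Complex.continuous_normSq.aestronglyMeasurable]
  simp only [Complex.normSq_add_mul_I]
  rw [integral_add ((integrable_sq_gaussianReal 0 _).comp_fst _)
    ((integrable_sq_gaussianReal 0 _).comp_snd _), integral_fun_fst (fun x => x ^ 2),
    integral_fun_snd (fun x => x ^ 2), integral_sq_gaussianReal_zero]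
  norm_num

lemma cgauss_ae_ne_zero : ∀ᵐ z ∂cgauss, z ≠ 0 := by
  have h0 : gaussianReal 0 (1 / 2) {0} = 0 := by
    have := nullSingletonClass_gaussianReal (μ := 0) (v := 1 / 2) (by norm_num)
    exact measure_singleton 0
  rw [ae_iff, cgauss, Measure.map_apply measurable_ofReal_add_mul_I (by measurability)]
  refine measure_mono_null (t := Prod.fst ⁻¹' {0}) (fun p hp => ?_) ?_
  · simp_all [Complex.ext_iff]
  · rw [← prod_univ, Measure.prod_prod, h0, zero_mul]

lemma integral_pos_of_ae_pos {α : Type*} [MeasurableSpace α] {μ : Measure α} [NeZero μ]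
    {f : α → ℝ} (hf : ∀ᵐ x ∂μ, 0 < f x) (hfi : Integrable f μ) : 0 < ∫ x, f x ∂μ := by
  have hsupp : Function.support f =ᵐ[μ] (univ : Set α) :=
    ae_eq_univ.2 (ae_iff.1 (hf.mono fun x h => (Function.mem_support.2 h.ne' :
      x ∈ Function.support f)))
  rw [integral_pos_iff_support_of_nonneg_ae (hf.mono fun _ h => h.le) hfi, measure_congr hsupp]
  exact Measure.measure_univ_pos.2 (NeZero.ne μ)

noncomputable def meanLogI0 (μ : Measure ℂ) (φ : ℝ) : ℝ :=
  ∫ z, log (I0 (φ * Complex.normSq z)) ∂μ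

section meanLogI0

variable {μ : Measure ℂ}

lemma integrable_log_I0_mul_normSq (hμ : Integrable Complex.normSq μ) (φ : ℝ) :
    Integrable (fun z => log (I0 (φ * Complex.normSq z))) μ := by
  refine (hμ.const_mul |φ|).mono'
    (continuous_log_I0.comp (by fun_prop)).aestronglyMeasurable (ae_of_all _ fun z => ?_)
  rw [norm_of_nonneg (log_I0_nonneg _)]
  simpa [abs_mul, abs_of_nonneg (Complex.normSq_nonneg z)] using
    log_I0_le_abs (φ * Complex.normSq z)

@[simp] lemma meanLogI0_zero : meanLogI0 μ 0 = 0 := by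
  simp [meanLogI0]

lemma meanLogI0_nonneg (φ : ℝ) : 0 ≤ meanLogI0 μ φ :=
  integral_nonneg fun _ => log_I0_nonneg _

lemma meanLogI0_pos [NeZero μ] (hμ : Integrable Complex.normSq μ) (h0 : ∀ᵐ z ∂μ, z ≠ 0)
    {φ : ℝ} (hφ : φ ≠ 0) : 0 < meanLogI0 μ φ :=
  integral_pos_of_ae_pos (h0.mono fun z hz => log_I0_pos (mul_ne_zero hφ (by simpa using hz)))
    (integrable_log_I0_mul_normSq hμ φ)

lemma abs_meanLogI0_sub_le (hμ : Integrable Complex.normSq μ) (a b : ℝ) :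
    |meanLogI0 μ a - meanLogI0 μ b| ≤ |a - b| * ∫ z, Complex.normSq z ∂μ := by
  rw [meanLogI0, meanLogI0, ← integral_sub (integrable_log_I0_mul_normSq hμ a)
    (integrable_log_I0_mul_normSq hμ b), ← integral_const_mul]
  refine (abs_integral_le_integral_abs).trans (integral_mono
    ((integrable_log_I0_mul_normSq hμ a).sub (integrable_log_I0_mul_normSq hμ b)).abs
    (hμ.const_mul _) fun z => ?_)
  simpa [← sub_mul, abs_mul, abs_of_nonneg (Complex.normSq_nonneg z)] using
    abs_log_I0_sub_log_I0_le (a * Complex.normSq z) (b * Complex.normSq z)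

lemma continuous_meanLogI0 (hμ : Integrable Complex.normSq μ) : Continuous (meanLogI0 μ) :=
  (LipschitzWith.of_dist_le' (K := ∫ z, Complex.normSq z ∂μ) fun a b => by
    simpa [Real.dist_eq, mul_comm] using abs_meanLogI0_sub_le hμ a b).continuous

lemma mul_cos_sub_log_le_meanLogI0 [IsProbabilityMeasure μ] (hμ : Integrable Complex.normSq μ)
    {φ δ : ℝ} (hφ : 0 ≤ φ) (hδ : 0 < δ) (hδπ : δ ≤ π) :
    φ * cos δ * ∫ z, Complex.normSq z ∂μ - log (π / δ) ≤ meanLogI0 μ φ := by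
  calc φ * cos δ * ∫ z, Complex.normSq z ∂μ - log (π / δ)
      = ∫ z, (φ * cos δ * Complex.normSq z - log (π / δ)) ∂μ := by
        rw [integral_sub (hμ.const_mul _) (integrable_const _), integral_const_mul]
        simp
    _ ≤ meanLogI0 μ φ := by
        refine integral_mono ((hμ.const_mul _).sub (integrable_const _))
          (integrable_log_I0_mul_normSq hμ φ) fun z => ?_
        have := mul_cos_sub_log_le_log_I0 (mul_nonneg hφ (Complex.normSq_nonneg z)) hδ hδπ
        linarith

lemma meanLogI0_midpoint_lt [NeZero μ] (hμ : Integrable Complex.normSq μ)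
    (h0 : ∀ᵐ z ∂μ, z ≠ 0) {a b : ℝ} (hab : a ≠ b) :
    meanLogI0 μ ((a + b) / 2) < (meanLogI0 μ a + meanLogI0 μ b) / 2 := by
  have hint := integrable_log_I0_mul_normSq hμ
  have hmean : Integrable (fun z => (log (I0 (a * Complex.normSq z)) +
      log (I0 (b * Complex.normSq z))) / 2) μ := ((hint a).add (hint b)).div_const 2
  have hgap : 0 < ∫ z, ((log (I0 (a * Complex.normSq z)) + log (I0 (b * Complex.normSq z))) / 2
      - log (I0 ((a + b) / 2 * Complex.normSq z))) ∂μ := by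
    refine integral_pos_of_ae_pos (h0.mono fun z hz => ?_) (hmean.sub (hint _))
    have hne : a * Complex.normSq z ≠ b * Complex.normSq z :=
      fun h => hab (mul_right_cancel₀ (by simpa using hz) h)
    have := log_I0_midpoint_lt hne
    rw [show (a * Complex.normSq z + b * Complex.normSq z) / 2 = (a + b) / 2 * Complex.normSq z by
      ring] at this
    linarith
  rw [integral_sub hmean (hint _), integral_div,
    integral_add (hint a) (hint b)] at hgap
  unfold meanLogI0
  linarith

end meanLogI0

noncomputable def besselObjective (q φ : ℝ) : ℝ := q * φ - meanLogI0 cgauss φ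

lemma continuous_besselObjective (q : ℝ) : Continuous (besselObjective q) :=
  (continuous_const.mul continuous_id).sub (continuous_meanLogI0 integrable_normSq_cgauss)

@[simp] lemma besselObjective_zero (q : ℝ) : besselObjective q 0 = 0 := by
  simp [besselObjective]

lemma besselObjective_neg {q φ : ℝ} (hq : 0 ≤ q) (hφ : φ < 0) : besselObjective q φ < 0 := by
  have := meanLogI0_pos integrable_normSq_cgauss cgauss_ae_ne_zero hφ.ne
  unfold besselObjective
  nlinarith

lemma besselObjective_le {q φ δ : ℝ} (hφ : 0 ≤ φ) (hδ : 0 < δ) (hδπ : δ ≤ π) :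
    besselObjective q φ ≤ log (π / δ) - φ * (cos δ - q) := by
  have := mul_cos_sub_log_le_meanLogI0 integrable_normSq_cgauss hφ hδ hδπ
  rw [integral_normSq_cgauss] at this
  unfold besselObjective
  linarith

lemma exists_pos_le_pi_lt_cos {p : ℝ} (hp : p < 1) : ∃ δ, 0 < δ ∧ δ ≤ π ∧ p < cos δ := by
  set c := max ((1 + p) / 2) 0
  have hc1 : c < 1 := max_lt (by linarith) one_pos
  refine ⟨arccos c, arccos_pos.2 hc1, arccos_le_pi c, ?_⟩
  rw [cos_arccos (by linarith [le_max_right ((1 + p) / 2) 0]) hc1.le]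
  linarith [le_max_left ((1 + p) / 2) 0]

lemma nonneg_of_forall_besselObjective_le {q φ₀ : ℝ} (hq : 0 ≤ q)
    (h : ∀ φ, besselObjective q φ ≤ besselObjective q φ₀) : 0 ≤ φ₀ :=
  not_lt.1 fun hneg => by linarith [besselObjective_neg hq hneg, besselObjective_zero q ▸ h 0]

lemma le_of_forall_besselObjective_le {q p φ₀ δ : ℝ} (hq : 0 ≤ q) (hqp : q ≤ p) (hδ : 0 < δ)
    (hδπ : δ ≤ π) (hp : p < cos δ) (h : ∀ φ, besselObjective q φ ≤ besselObjective q φ₀) :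
    φ₀ ≤ log (π / δ) / (cos δ - p) := by
  have hφ₀ := nonneg_of_forall_besselObjective_le hq h
  have := besselObjective_le (q := q) hφ₀ hδ hδπ
  rw [le_div_iff₀ (by linarith)]
  nlinarith [besselObjective_zero q ▸ h 0]

lemma exists_forall_besselObjective_le {q : ℝ} (hq0 : 0 ≤ q) (hq1 : q < 1) :
    ∃ φ₀, ∀ φ, besselObjective q φ ≤ besselObjective q φ₀ := by
  obtain ⟨δ, hδ, hδπ, hcos⟩ := exists_pos_le_pi_lt_cos hq1
  refine (continuous_besselObjective q).exists_forall_ge' 0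
    (Filter.mem_cocompact.2 ⟨Icc 0 (log (π / δ) / (cos δ - q)), isCompact_Icc, fun φ hφ => ?_⟩)
  show besselObjective q φ ≤ besselObjective q 0
  rw [besselObjective_zero]
  rcases lt_or_ge φ 0 with hneg | hnn
  · exact (besselObjective_neg hq0 hneg).le
  · have hR : log (π / δ) / (cos δ - q) < φ := by simpa [hnn] using hφ
    rw [div_lt_iff₀ (by linarith)] at hR
    linarith [besselObjective_le (q := q) hnn hδ hδπ]

lemma eq_of_forall_besselObjective_le {q φ₁ φ₂ : ℝ}
    (h₁ : ∀ φ, besselObjective q φ ≤ besselObjective q φ₁)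
    (h₂ : ∀ φ, besselObjective q φ ≤ besselObjective q φ₂) : φ₁ = φ₂ := by
  by_contra hne
  have hmid := meanLogI0_midpoint_lt integrable_normSq_cgauss cgauss_ae_ne_zero hne
  have h₁₂ := h₁ φ₂
  have h₂₁ := h₂ φ₁
  have h₁mid := h₁ ((φ₁ + φ₂) / 2)
  unfold besselObjective at h₁₂ h₂₁ h₁mid
  linarith

/-- For every `q ∈ [0,1)`, the function `φ ↦ qφ − E ln I₀(φ|Z|²)` has a unique maximizer
`φ₂(q)`, which is nonnegative (and finite); moreover for every `η ∈ (0,1)` the maximizers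
are bounded uniformly over `q ∈ [0, 1−η]`. -/
theorem bessel_variational_problem :
    (∀ q ∈ Set.Ico (0 : ℝ) 1, ∃! phi0 : ℝ, ∀ phi : ℝ,
      q * phi - ∫ z, Real.log (I0 (phi * Complex.normSq z)) ∂cgauss ≤
        q * phi0 - ∫ z, Real.log (I0 (phi0 * Complex.normSq z)) ∂cgauss) ∧
    (∀ q ∈ Set.Ico (0 : ℝ) 1, ∀ phi0 : ℝ,
      (∀ phi : ℝ,
        q * phi - ∫ z, Real.log (I0 (phi * Complex.normSq z)) ∂cgauss ≤
          q * phi0 - ∫ z, Real.log (I0 (phi0 * Complex.normSq z)) ∂cgauss) →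
      0 ≤ phi0) ∧
    (∀ η ∈ Set.Ioo (0 : ℝ) 1, ∃ B : ℝ, ∀ q ∈ Set.Icc (0 : ℝ) (1 - η), ∀ phi0 : ℝ,
      (∀ phi : ℝ,
        q * phi - ∫ z, Real.log (I0 (phi * Complex.normSq z)) ∂cgauss ≤
          q * phi0 - ∫ z, Real.log (I0 (phi0 * Complex.normSq z)) ∂cgauss) →
      phi0 ≤ B) := by
  refine ⟨fun q hq => ?_, fun q hq φ₀ h => nonneg_of_forall_besselObjective_le hq.1 h,
    fun η hη => ?_⟩
  · obtain ⟨φ₀, h⟩ := exists_forall_besselObjective_le hq.1 hq.2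
    exact ⟨φ₀, h, fun φ₁ h₁ => eq_of_forall_besselObjective_le h₁ h⟩
  · obtain ⟨δ, hδ, hδπ, hcos⟩ := exists_pos_le_pi_lt_cos (sub_lt_self 1 hη.1)
    exact ⟨log (π / δ) / (cos δ - (1 - η)),
      fun q hq φ₀ h => le_of_forall_besselObjective_le hq.1 hq.2 hδ hδπ hcos h⟩
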